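/- Any 2k+2 distinct points on the moment curve t ↦ (t, t², …, t^{2k+1}) in ℝ^{2k+1} are affinely independent, and moreover for any two disjoint subsets S, T of a point set on the moment curve with |S| + |T| ≤ 2k+2, the convex hulls conv(S) and conv(T) are disjoint. -/

import Mathlib

/-- The moment curve `t ↦ (t, t², …, t^m)` in ℝ^m. -/
def momentCurve (m : ℕ) (t : ℝ) : Fin m → ℝ := fun i => t ^ ((i : ℕ) + 1)

/-!
A vanishing affine combination `∑ wⱼ γ(tⱼ)` of `m + 1` points of the moment curve gives
`∑ wⱼ tⱼ^i = 0` for `i = 0, …, m` (the case `i = 0` being `∑ wⱼ = 0`), so `w = 0` because the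
Vandermonde determinant of distinct nodes is nonzero. Hence any `m + 1` points of the curve span
a simplex, and two faces of a simplex on disjoint vertex sets have disjoint convex hulls.
-/

lemma disjoint_convexHull_of_affineIndependent {R E : Type*} [Field R] [LinearOrder R]
    [IsStrictOrderedRing R] [AddCommGroup E] [Module R E] [DecidableEq E] {t₁ t₂ : Finset E}
    (hs : AffineIndependent R ((↑) : ↑(t₁ ∪ t₂) → E)) (ht : Disjoint t₁ t₂) :
    Disjoint (convexHull R (t₁ : Set E)) (convexHull R (t₂ : Set E)) := by
  rw [Set.disjoint_iff_inter_eq_empty, ← hs.convexHull_inter', ← Finset.coe_inter,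
    Finset.disjoint_iff_inter_eq_empty.mp ht, Finset.coe_empty, convexHull_empty]

lemma momentCurve_injective {m : ℕ} (hm : 0 < m) : Function.Injective (momentCurve m) :=
  fun a b h => by simpa [momentCurve] using congrFun h ⟨0, hm⟩

lemma affineIndependent_momentCurve {m : ℕ} {t : Fin (m + 1) → ℝ} (ht : Function.Injective t) :
    AffineIndependent ℝ (fun i => momentCurve m (t i)) := by
  rw [affineIndependent_iff_of_fintype]
  intro w hw hcomb
  rw [Finset.weightedVSub_eq_linear_combination _ hw] at hcomb
  have hpow : ∀ i : Fin (m + 1), ∑ j, w j * t j ^ (i : ℕ) = 0 := by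
    refine Fin.cases (by simpa using hw) fun n => ?_
    simpa [momentCurve] using congrFun hcomb n
  exact congrFun (Matrix.eq_zero_of_forall_pow_sum_mul_pow_eq_zero ht hpow)

lemma affineIndependent_momentCurve_image {m : ℕ} {S : Finset ℝ} (hS : S.card ≤ m + 1) :
    AffineIndependent ℝ ((↑) : ↑(S.image (momentCurve m)) → (Fin m → ℝ)) := by
  obtain ⟨U, hSU, hU⟩ := Infinite.exists_superset_card_eq S (m + 1) hS
  let e : Fin (m + 1) ≃ U := (U.equivFinOfCardEq hU).symm
  have hrange :
      AffineIndependent ℝ ((↑) : Set.range (fun i => momentCurve m (e i)) → (Fin m → ℝ)) :=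
    (affineIndependent_momentCurve (Subtype.coe_injective.comp e.injective)).range
  refine hrange.mono ?_
  rintro _ hx
  obtain ⟨s, hs, rfl⟩ := Finset.mem_image.mp hx
  exact ⟨e.symm ⟨s, hSU hs⟩, by simp⟩

/-- Any 2k+2 distinct points on the moment curve in ℝ^(2k+1) are affinely
independent, and the convex hulls of the images of any two disjoint parameter
sets of total size at most 2k+2 are disjoint. -/
theorem stmt7 {k : ℕ} :
    (∀ t : Fin (2 * k + 2) → ℝ, Function.Injective t →
      AffineIndependent ℝ (fun i => momentCurve (2 * k + 1) (t i))) ∧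
    (∀ S T : Finset ℝ, Disjoint S T → S.card + T.card ≤ 2 * k + 2 →
      Disjoint (convexHull ℝ (momentCurve (2 * k + 1) '' (S : Set ℝ)))
        (convexHull ℝ (momentCurve (2 * k + 1) '' (T : Set ℝ)))) := by
  refine ⟨fun t ht => affineIndependent_momentCurve ht, fun S T hST hcard => ?_⟩
  have hγ := momentCurve_injective (m := 2 * k + 1) (by omega)
  rw [← Finset.coe_image, ← Finset.coe_image]
  refine disjoint_convexHull_of_affineIndependent ?_ ((Finset.disjoint_image hγ).mpr hST)
  rw [← Finset.image_union]
  exact affineIndependent_momentCurve_image ((Finset.card_union_le S T).trans hcard)
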